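/- arXiv:2509.15467 — 4 statements merged into one kernel-verified Lean document; each statement's English description precedes it below -/
import Mathlib

section
/- Consider the leader-follower networked system on a probability space (Ω, ℱ, μ): x₀(k+1) = A₀₀x₀(k) + B₀₀u₀(k) + w₀(k) and x₁(k+1) = A₁₁x₁(k) + B₁₁u₁(k) + A₁₀x₀(k) + B₁₀u₀(k) + w₁(k) for k = 0, …, N−1, where x₀(0), x₁(0) : Ω → ℝⁿ and the noises w₀(0), …, w₀(N−1), w₁(0), …, w₁(N−1) : Ω → ℝⁿ are mutually independent and square-integrable with E[w₀(k)] = 0, and the controls are u₀(k) = g₀ₖ(x₀(0), …, x₀(k)), u₁(k) = g₁ₖ(x₀(0), …, x₀(k), x₁(0), …, x₁(k)) for measurable functions g₀ₖ, g₁ₖ, with all states and controls square-integrable. Let F₀(k) be the σ-algebra generated by (x₀(0), …, x₀(k)). Then for every k with 1 ≤ k ≤ N and all coordinate indices i, j ∈ {1, …, n}, almost surely E[x₀(k)ᵢ · x₁(k)ⱼ | F₀(k−1)] = E[x₀(k)ᵢ | F₀(k−1)] · E[x₁(k)ⱼ | F₀(k−1)]; that is, x₀(k) and x₁(k) are conditionally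 uncorrelated given F₀(k−1). -/
/-!
Write `x₀(k+1) = a + w₀(k)` with `a = A₀₀ x₀(k) + B₀₀ u₀(k)` measurable for `F₀(k)`. Let `H` be
the σ-algebra generated by the initial states and all noises other than `w₀(k)`: it contains
`F₀(k)` and makes `x₁(k+1)` measurable, while `w₀(k)` is independent of it. Hence
`E[w₀(k) x₁(k+1) | H] = x₁(k+1) E[w₀(k)] = 0`, and by the tower property both `w₀(k)` and
`w₀(k) x₁(k+1)` have zero conditional expectation given `F₀(k)`, which leaves
`E[x₀(k+1) x₁(k+1) | F₀(k)] = a E[x₁(k+1) | F₀(k)] = E[x₀(k+1) | F₀(k)] E[x₁(k+1) | F₀(k)]`.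
-/

open MeasureTheory ProbabilityTheory Matrix

section CondExp

variable {Ω : Type*} {m mH mW mΩ : MeasurableSpace Ω} {μ : Measure Ω} [IsProbabilityMeasure μ]
  {W Y : Ω → ℝ}

theorem condExp_ae_eq_zero_of_indep (hm : m ≤ mΩ) (hWle : mW ≤ mΩ)
    (hW : StronglyMeasurable[mW] W) (hind : Indep mW m μ) (hWmean : μ[W] = 0) :
    μ[W | m] =ᵐ[μ] 0 := by
  have h := condExp_indep_eq hWle hm hW hind
  rwa [hWmean] at h

theorem condExp_mul_ae_eq_zero_of_indep (hmH : m ≤ mH) (hH : mH ≤ mΩ) (hWle : mW ≤ mΩ)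
    (hW : StronglyMeasurable[mW] W) (hind : Indep mW mH μ) (hWmean : μ[W] = 0)
    (hY : StronglyMeasurable[mH] Y) (hWint : Integrable W μ) (hWY : Integrable (W * Y) μ) :
    μ[W * Y | m] =ᵐ[μ] 0 := by
  have hYW : μ[Y * W | mH] =ᵐ[μ] 0 := by
    filter_upwards [condExp_mul_of_stronglyMeasurable_left hY (mul_comm W Y ▸ hWY) hWint,
      condExp_ae_eq_zero_of_indep hH hWle hW hind hWmean] with ω h h0
    simp [h, h0]
  calc μ[W * Y | m] =ᵐ[μ] μ[μ[Y * W | mH] | m] := by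
        rw [mul_comm]; exact (condExp_condExp_of_le hmH hH).symm
    _ =ᵐ[μ] μ[0 | m] := condExp_congr_ae hYW
    _ = 0 := condExp_zero

theorem condExp_mul_ae_eq_mul_condExp_of_indep {X : Ω → ℝ} (hmH : m ≤ mH) (hH : mH ≤ mΩ)
    (hWle : mW ≤ mΩ) (hXW : StronglyMeasurable[m] (X - W)) (hW : StronglyMeasurable[mW] W)
    (hind : Indep mW mH μ) (hWmean : μ[W] = 0) (hY : StronglyMeasurable[mH] Y)
    (hX : MemLp X 2 μ) (hWL : MemLp W 2 μ) (hYL : MemLp Y 2 μ) :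
    μ[X * Y | m] =ᵐ[μ] μ[X | m] * μ[Y | m] := by
  have hm : m ≤ mΩ := hmH.trans hH
  have haL : MemLp (X - W) 2 μ := hX.sub hWL
  have hX_eq : X = (X - W) + W := (sub_add_cancel X W).symm
  have hWm : μ[W | m] =ᵐ[μ] 0 :=
    condExp_ae_eq_zero_of_indep hm hWle hW (indep_of_indep_of_le_right hind hmH) hWmean
  have hcondX : μ[X | m] =ᵐ[μ] X - W := by
    rw [hX_eq]
    filter_upwards [condExp_add (haL.integrable one_le_two) (hWL.integrable one_le_two) m, hWm]
      with ω h h0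
    rw [h, Pi.add_apply, h0, condExp_of_stronglyMeasurable hm hXW (haL.integrable one_le_two)]
    simp
  have hcondXY : μ[X * Y | m] =ᵐ[μ] (X - W) * μ[Y | m] := by
    rw [hX_eq, add_mul]
    filter_upwards [condExp_add (haL.integrable_mul hYL) (hWL.integrable_mul hYL) m,
      condExp_mul_of_stronglyMeasurable_left hXW (haL.integrable_mul hYL)
        (hYL.integrable one_le_two),
      condExp_mul_ae_eq_zero_of_indep hmH hH hWle hW hind hWmean hY (hWL.integrable one_le_two)
        (hWL.integrable_mul hYL)] with ω h h₁ h₂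
    simp [h, h₁, h₂]
  filter_upwards [hcondX, hcondXY] with ω h₁ h₂
  simp [h₁, h₂]

end CondExp

theorem ProbabilityTheory.iIndepFun.indep_comap_biSup_compl {Ω ι β : Type*}
    {mΩ : MeasurableSpace Ω} {μ : Measure Ω} [mβ : MeasurableSpace β] {f : ι → Ω → β}
    (hf : ∀ i, Measurable (f i)) (h : iIndepFun f μ) (i : ι) :
    Indep (mβ.comap (f i)) (⨆ j ∈ ({i}ᶜ : Set ι), mβ.comap (f j)) μ := by
  simpa using indep_biSup_compl (fun j => (hf j).comap_le) ((iIndepFun_iff_iIndep _ _ _).mp h) {i}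

theorem measurable_biSup_compl_comap {Ω ι β : Type*} [mβ : MeasurableSpace β] {f : ι → Ω → β}
    {i j : ι} (hji : j ≠ i) : Measurable[⨆ j ∈ ({i}ᶜ : Set ι), mβ.comap (f j)] (f j) :=
  measurable_iff_comap_le.mpr
    (le_iSup₂ (f := fun j (_ : j ∈ ({i}ᶜ : Set ι)) => mβ.comap (f j)) j hji)

namespace LeaderFollower

variable {Ω : Type*}

def history {E : Type*} (x : ℕ → Ω → E) (k : ℕ) : Ω → Fin (k + 1) → E := fun ω i => x i ω

variable {E : Type*} [MeasurableSpace E] {m : MeasurableSpace Ω} {x : ℕ → Ω → E} {k : ℕ}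

theorem measurable_history (hx : ∀ l ≤ k, Measurable[m] (x l)) : Measurable[m] (history x k) :=
  measurable_pi_lambda _ fun i => hx i (Nat.lt_succ_iff.mp i.isLt)

theorem measurable_comap_history {l : ℕ} (hl : l ≤ k) :
    Measurable[MeasurableSpace.comap (history x k) inferInstance] (x l) :=
  (measurable_pi_apply (⟨l, Nat.lt_succ_of_le hl⟩ : Fin (k + 1))).comp
    (comap_measurable (history x k))

variable {n m₁ m₂ N : ℕ} {A₀₀ A₁₀ A₁₁ : Matrix (Fin n) (Fin n) ℝ}
  {B₀₀ B₁₀ : Matrix (Fin n) (Fin m₁) ℝ} {B₁₁ : Matrix (Fin n) (Fin m₂) ℝ}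
  {x₀ x₁ w₀ w₁ : ℕ → Ω → Fin n → ℝ} {u₀ : ℕ → Ω → Fin m₁ → ℝ} {u₁ : ℕ → Ω → Fin m₂ → ℝ}
  {g₀ : ∀ k : ℕ, (Fin (k + 1) → Fin n → ℝ) → Fin m₁ → ℝ}
  {g₁ : ∀ k : ℕ, ((Fin (k + 1) → Fin n → ℝ) × (Fin (k + 1) → Fin n → ℝ)) → Fin m₂ → ℝ}

theorem measurable_leader_control (hk : k < N)
    (hu₀pol : ∀ k < N, ∀ ω, u₀ k ω = g₀ k (history x₀ k ω)) (hg₀meas : ∀ k, Measurable (g₀ k))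
    (hx₀ : ∀ l ≤ k, Measurable[m] (x₀ l)) : Measurable[m] (u₀ k) := by
  rw [funext (hu₀pol k hk)]
  exact (hg₀meas k).comp (measurable_history hx₀)

theorem measurable_follower_control (hk : k < N)
    (hu₁pol : ∀ k < N, ∀ ω, u₁ k ω = g₁ k (history x₀ k ω, history x₁ k ω))
    (hg₁meas : ∀ k, Measurable (g₁ k))
    (hx₀ : ∀ l ≤ k, Measurable[m] (x₀ l)) (hx₁ : ∀ l ≤ k, Measurable[m] (x₁ l)) :
    Measurable[m] (u₁ k) := by
  rw [funext (hu₁pol k hk)]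
  exact (hg₁meas k).comp ((measurable_history hx₀).prodMk (measurable_history hx₁))

theorem measurable_leader_succ_sub_noise (hk : k < N)
    (hdyn₀ : ∀ k < N, ∀ ω, x₀ (k + 1) ω = A₀₀ *ᵥ x₀ k ω + B₀₀ *ᵥ u₀ k ω + w₀ k ω)
    (hu₀pol : ∀ k < N, ∀ ω, u₀ k ω = g₀ k (history x₀ k ω)) (hg₀meas : ∀ k, Measurable (g₀ k))
    (hx₀ : ∀ l ≤ k, Measurable[m] (x₀ l)) : Measurable[m] (x₀ (k + 1) - w₀ k) := by
  have hx₀k := hx₀ k le_rfl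
  have hu₀k := measurable_leader_control hk hu₀pol hg₀meas hx₀
  have h : x₀ (k + 1) - w₀ k = fun ω => A₀₀ *ᵥ x₀ k ω + B₀₀ *ᵥ u₀ k ω := by
    funext ω; simp [hdyn₀ k hk ω]
  rw [h]
  fun_prop

theorem measurable_follower_succ (hk : k < N)
    (hdyn₁ : ∀ k < N, ∀ ω, x₁ (k + 1) ω =
      A₁₁ *ᵥ x₁ k ω + B₁₁ *ᵥ u₁ k ω + A₁₀ *ᵥ x₀ k ω + B₁₀ *ᵥ u₀ k ω + w₁ k ω)
    (hu₀pol : ∀ k < N, ∀ ω, u₀ k ω = g₀ k (history x₀ k ω))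
    (hu₁pol : ∀ k < N, ∀ ω, u₁ k ω = g₁ k (history x₀ k ω, history x₁ k ω))
    (hg₀meas : ∀ k, Measurable (g₀ k)) (hg₁meas : ∀ k, Measurable (g₁ k))
    (hx₀ : ∀ l ≤ k, Measurable[m] (x₀ l)) (hx₁ : ∀ l ≤ k, Measurable[m] (x₁ l))
    (hw₁ : Measurable[m] (w₁ k)) : Measurable[m] (x₁ (k + 1)) := by
  have hx₀k := hx₀ k le_rfl
  have hx₁k := hx₁ k le_rfl
  have hu₀k := measurable_leader_control hk hu₀pol hg₀meas hx₀
  have hu₁k := measurable_follower_control hk hu₁pol hg₁meas hx₀ hx₁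
  rw [funext (hdyn₁ k hk)]
  fun_prop

theorem measurable_states (hk : k ≤ N)
    (hdyn₀ : ∀ k < N, ∀ ω, x₀ (k + 1) ω = A₀₀ *ᵥ x₀ k ω + B₀₀ *ᵥ u₀ k ω + w₀ k ω)
    (hdyn₁ : ∀ k < N, ∀ ω, x₁ (k + 1) ω =
      A₁₁ *ᵥ x₁ k ω + B₁₁ *ᵥ u₁ k ω + A₁₀ *ᵥ x₀ k ω + B₁₀ *ᵥ u₀ k ω + w₁ k ω)
    (hu₀pol : ∀ k < N, ∀ ω, u₀ k ω = g₀ k (history x₀ k ω))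
    (hu₁pol : ∀ k < N, ∀ ω, u₁ k ω = g₁ k (history x₀ k ω, history x₁ k ω))
    (hg₀meas : ∀ k, Measurable (g₀ k)) (hg₁meas : ∀ k, Measurable (g₁ k))
    (hx₀ : Measurable[m] (x₀ 0)) (hx₁ : Measurable[m] (x₁ 0))
    (hw₀ : ∀ l < k, Measurable[m] (w₀ l)) (hw₁ : ∀ l < k, Measurable[m] (w₁ l)) :
    ∀ l ≤ k, Measurable[m] (x₀ l) ∧ Measurable[m] (x₁ l) := by
  intro l hl
  induction l using Nat.strong_induction_on with
  | _ l ih =>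
  cases l with
  | zero => exact ⟨hx₀, hx₁⟩
  | succ r =>
    have hrN : r < N := by omega
    have hprev₀ : ∀ l ≤ r, Measurable[m] (x₀ l) := fun l hlr => (ih l (by omega) (by omega)).1
    have hprev₁ : ∀ l ≤ r, Measurable[m] (x₁ l) := fun l hlr => (ih l (by omega) (by omega)).2
    refine ⟨?_, measurable_follower_succ hrN hdyn₁ hu₀pol hu₁pol hg₀meas hg₁meas hprev₀ hprev₁
      (hw₁ r hl)⟩
    rw [← sub_add_cancel (x₀ (r + 1)) (w₀ r)]
    exact (measurable_leader_succ_sub_noise hrN hdyn₀ hu₀pol hg₀meas hprev₀).add (hw₀ r hl)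

end LeaderFollower

theorem leader_follower_conditionally_uncorrelated_general
    {Ω : Type*} [MeasurableSpace Ω] (μ : Measure Ω) [IsProbabilityMeasure μ]
    (n m₁ m₂ N : ℕ)
    (A₀₀ A₁₀ A₁₁ : Matrix (Fin n) (Fin n) ℝ)
    (B₀₀ B₁₀ : Matrix (Fin n) (Fin m₁) ℝ) (B₁₁ : Matrix (Fin n) (Fin m₂) ℝ)
    (x₀ x₁ w₀ w₁ : ℕ → Ω → (Fin n → ℝ))
    (u₀ : ℕ → Ω → (Fin m₁ → ℝ)) (u₁ : ℕ → Ω → (Fin m₂ → ℝ))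
    -- dynamics of the leader and the follower
    (hdyn₀ : ∀ k < N, ∀ ω, x₀ (k + 1) ω =
      A₀₀.mulVec (x₀ k ω) + B₀₀.mulVec (u₀ k ω) + w₀ k ω)
    (hdyn₁ : ∀ k < N, ∀ ω, x₁ (k + 1) ω =
      A₁₁.mulVec (x₁ k ω) + B₁₁.mulVec (u₁ k ω)
        + A₁₀.mulVec (x₀ k ω) + B₁₀.mulVec (u₀ k ω) + w₁ k ω)
    -- measurability of the primitive random vectors
    (hmx₀ : Measurable (x₀ 0)) (hmx₁ : Measurable (x₁ 0))
    (hmw₀ : ∀ k < N, Measurable (w₀ k)) (hmw₁ : ∀ k < N, Measurable (w₁ k))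
    -- mutual independence of the initial states and all noises
    (hindep : iIndepFun
      (Sum.elim (![x₀ 0, x₁ 0])
        (Sum.elim (fun i : Fin N => w₀ i) (fun i : Fin N => w₁ i))) μ)
    -- square-integrability of noises, states and controls, zero-mean leader noise
    (hw₀int : ∀ k < N, MemLp (w₀ k) 2 μ)
    (hw₀mean : ∀ k < N, ∫ ω, w₀ k ω ∂μ = 0)
    (hx₀int : ∀ k ≤ N, MemLp (x₀ k) 2 μ) (hx₁int : ∀ k ≤ N, MemLp (x₁ k) 2 μ)
    -- controls are measurable functions of the appropriate information sets
    (g₀ : ∀ k : ℕ, (Fin (k+1) → (Fin n → ℝ)) → (Fin m₁ → ℝ))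
    (g₁ : ∀ k : ℕ, ((Fin (k+1) → (Fin n → ℝ)) × (Fin (k+1) → (Fin n → ℝ))) → (Fin m₂ → ℝ))
    (hg₀meas : ∀ k, Measurable (g₀ k)) (hg₁meas : ∀ k, Measurable (g₁ k))
    (hu₀pol : ∀ k < N, ∀ ω, u₀ k ω = g₀ k (fun i : Fin (k+1) => x₀ i ω))
    (hu₁pol : ∀ k < N, ∀ ω, u₁ k ω =
      g₁ k ((fun i : Fin (k+1) => x₀ i ω), (fun i : Fin (k+1) => x₁ i ω)))
    -- the leader's information σ-algebras
    (F₀ : ℕ → MeasurableSpace Ω)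
    (hF₀ : ∀ k, F₀ k =
      MeasurableSpace.comap (fun ω => (fun i : Fin (k+1) => x₀ i ω)) inferInstance) :
    ∀ k < N, ∀ i j : Fin n,
      μ[fun ω => x₀ (k+1) ω i * x₁ (k+1) ω j|F₀ k] =ᵐ[μ] fun ω =>
        (μ[fun ω' => x₀ (k+1) ω' i|F₀ k]) ω * (μ[fun ω' => x₁ (k+1) ω' j|F₀ k]) ω := by
  open LeaderFollower in
  intro k hk i j
  set f : Fin 2 ⊕ (Fin N ⊕ Fin N) → Ω → Fin n → ℝ :=
    Sum.elim ![x₀ 0, x₁ 0] (Sum.elim (fun l : Fin N => w₀ l) (fun l : Fin N => w₁ l))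
  set K : Fin 2 ⊕ (Fin N ⊕ Fin N) := .inr (.inl ⟨k, hk⟩)
  have hmf : ∀ s, Measurable (f s) := by
    rintro (s | s | s)
    · fin_cases s
      exacts [hmx₀, hmx₁]
    · exact hmw₀ s s.isLt
    · exact hmw₁ s s.isLt
  set H : MeasurableSpace Ω := ⨆ s ∈ ({K}ᶜ : Set _), MeasurableSpace.comap (f s) inferInstance
  have hH : H ≤ _ := iSup₂_le fun s _ => (hmf s).comap_le
  have hHf : ∀ s ≠ K, Measurable[H] (f s) := fun s hs => measurable_biSup_compl_comap hs
  have hstates := measurable_states (m := H) hk.le hdyn₀ hdyn₁ hu₀pol hu₁pol hg₀meas hg₁meas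
    (hHf (.inl 0) (by simp [K])) (hHf (.inl 1) (by simp [K]))
    (fun l hl => hHf (.inr (.inl ⟨l, hl.trans hk⟩)) (by simp [K, Fin.ext_iff, hl.ne]))
    (fun l hl => hHf (.inr (.inr ⟨l, hl.trans hk⟩)) (by simp [K]))
  have hFH : F₀ k ≤ H := by
    rw [hF₀ k]
    exact (measurable_history fun l hl => (hstates l hl).1).comap_le
  have hY : Measurable[H] (x₁ (k + 1)) :=
    measurable_follower_succ hk hdyn₁ hu₀pol hu₁pol hg₀meas hg₁meas
      (fun l hl => (hstates l hl).1) (fun l hl => (hstates l hl).2)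
      (hHf (.inr (.inr ⟨k, hk⟩)) (by simp [K]))
  have hXW : Measurable[F₀ k] (x₀ (k + 1) - w₀ k) := by
    rw [hF₀ k]
    exact measurable_leader_succ_sub_noise hk hdyn₀ hu₀pol hg₀meas fun l hl =>
      measurable_comap_history hl
  have hWmean : ∫ ω, w₀ k ω i ∂μ = 0 := by
    rw [← eval_integral ((hw₀int k hk).integrable one_le_two).eval, hw₀mean k hk, Pi.zero_apply]
  exact condExp_mul_ae_eq_mul_condExp_of_indep hFH hH (hmw₀ k hk).comap_le
    ((measurable_pi_apply i).comp hXW).stronglyMeasurable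
    ((measurable_pi_apply i).comp (comap_measurable (w₀ k))).stronglyMeasurable
    (hindep.indep_comap_biSup_compl hmf K) hWmean
    ((measurable_pi_apply j).comp hY).stronglyMeasurable
    ((hx₀int (k + 1) hk).eval i) ((hw₀int k hk).eval i) ((hx₁int (k + 1) hk).eval j)

/-- Conditional uncorrelatedness of the leader and follower states (paper's Lemma 2):
for `1 ≤ k ≤ N` and all coordinates `i, j`,
`E[x₀(k)ᵢ x₁(k)ⱼ | F₀(k−1)] = E[x₀(k)ᵢ | F₀(k−1)] · E[x₁(k)ⱼ | F₀(k−1)]` almost surely. -/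
theorem leader_follower_conditionally_uncorrelated
    {Ω : Type*} [MeasurableSpace Ω] (μ : Measure Ω) [IsProbabilityMeasure μ]
    (n m₁ m₂ N : ℕ)
    (A₀₀ A₁₀ A₁₁ : Matrix (Fin n) (Fin n) ℝ)
    (B₀₀ B₁₀ : Matrix (Fin n) (Fin m₁) ℝ) (B₁₁ : Matrix (Fin n) (Fin m₂) ℝ)
    (x₀ x₁ w₀ w₁ : ℕ → Ω → (Fin n → ℝ))
    (u₀ : ℕ → Ω → (Fin m₁ → ℝ)) (u₁ : ℕ → Ω → (Fin m₂ → ℝ))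
    -- dynamics of the leader and the follower
    (hdyn₀ : ∀ k < N, ∀ ω, x₀ (k + 1) ω =
      A₀₀.mulVec (x₀ k ω) + B₀₀.mulVec (u₀ k ω) + w₀ k ω)
    (hdyn₁ : ∀ k < N, ∀ ω, x₁ (k + 1) ω =
      A₁₁.mulVec (x₁ k ω) + B₁₁.mulVec (u₁ k ω)
        + A₁₀.mulVec (x₀ k ω) + B₁₀.mulVec (u₀ k ω) + w₁ k ω)
    -- measurability of the primitive random vectors
    (hmx₀ : Measurable (x₀ 0)) (hmx₁ : Measurable (x₁ 0))
    (hmw₀ : ∀ k < N, Measurable (w₀ k)) (hmw₁ : ∀ k < N, Measurable (w₁ k))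
    -- mutual independence of the initial states and all noises
    (hindep : iIndepFun
      (Sum.elim (![x₀ 0, x₁ 0])
        (Sum.elim (fun i : Fin N => w₀ i) (fun i : Fin N => w₁ i))) μ)
    -- square-integrability of noises, states and controls, zero-mean leader noise
    (hw₀int : ∀ k < N, MemLp (w₀ k) 2 μ) (hw₁int : ∀ k < N, MemLp (w₁ k) 2 μ)
    (hw₀mean : ∀ k < N, ∫ ω, w₀ k ω ∂μ = 0)
    (hx₀int : ∀ k ≤ N, MemLp (x₀ k) 2 μ) (hx₁int : ∀ k ≤ N, MemLp (x₁ k) 2 μ)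
    (hu₀int : ∀ k < N, MemLp (u₀ k) 2 μ) (hu₁int : ∀ k < N, MemLp (u₁ k) 2 μ)
    -- controls are measurable functions of the appropriate information sets
    (g₀ : ∀ k : ℕ, (Fin (k+1) → (Fin n → ℝ)) → (Fin m₁ → ℝ))
    (g₁ : ∀ k : ℕ, ((Fin (k+1) → (Fin n → ℝ)) × (Fin (k+1) → (Fin n → ℝ))) → (Fin m₂ → ℝ))
    (hg₀meas : ∀ k, Measurable (g₀ k)) (hg₁meas : ∀ k, Measurable (g₁ k))
    (hu₀pol : ∀ k < N, ∀ ω, u₀ k ω = g₀ k (fun i : Fin (k+1) => x₀ i ω))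
    (hu₁pol : ∀ k < N, ∀ ω, u₁ k ω =
      g₁ k ((fun i : Fin (k+1) => x₀ i ω), (fun i : Fin (k+1) => x₁ i ω)))
    -- the leader's information σ-algebras
    (F₀ : ℕ → MeasurableSpace Ω)
    (hF₀ : ∀ k, F₀ k =
      MeasurableSpace.comap (fun ω => (fun i : Fin (k+1) => x₀ i ω)) inferInstance) :
    ∀ k < N, ∀ i j : Fin n,
      μ[fun ω => x₀ (k+1) ω i * x₁ (k+1) ω j|F₀ k] =ᵐ[μ] fun ω =>
        (μ[fun ω' => x₀ (k+1) ω' i|F₀ k]) ω * (μ[fun ω' => x₁ (k+1) ω' j|F₀ k]) ω :=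
  leader_follower_conditionally_uncorrelated_general μ n m₁ m₂ N A₀₀ A₁₀ A₁₁ B₀₀ B₁₀ B₁₁ x₀ x₁ w₀ w₁
    u₀ u₁ hdyn₀ hdyn₁ hmx₀ hmx₁ hmw₀ hmw₁ hindep hw₀int hw₀mean hx₀int hx₁int g₀ g₁ hg₀meas hg₁meas
    hu₀pol hu₁pol F₀ hF₀
end

section
/- Let A ∈ ℝ^{d×d}, B ∈ ℝ^{d×m}, 0 < γ < 1, let Q ∈ ℝ^{d×d} be symmetric positive semidefinite and R ∈ ℝ^{m×m} symmetric positive definite. Suppose 𝒫 ∈ ℝ^{d×d} is symmetric positive definite and satisfies the discounted algebraic Riccati equation 𝒫 = Q + γAᵀ𝒫A − γ²LᵀΨ⁻¹L, where L = Bᵀ𝒫A, Ψ = R + γBᵀ𝒫B, and H = γΨ⁻¹L. If moreover (1 − γ)𝒫 ≺ Q + HᵀRH (i.e., Q + HᵀRH − (1 − γ)𝒫 is positive definite), then every eigenvalue of the closed-loop matrix A − BH has modulus strictly less than 1; in particular (A − BH)ᵏ → 0 as k → ∞. -/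
/-!
Completing the square turns the Riccati equation into the Lyapunov (Stein) identity
`𝒫 = γ Mᵀ𝒫M + Q + HᵀRH` for the closed-loop matrix `M = A − BH`, so the gap condition says
exactly that `𝒫 − Mᵀ𝒫M ≻ 0`. For an eigenvector `v` of `M` with eigenvalue `μ` this gives
`(1 − |μ|²) v*𝒫v > 0`, hence `|μ| < 1`; Gelfand's formula then makes `‖Mᵏ‖` decay geometrically.
-/

open Matrix Filter Topology
open scoped ComplexOrder

theorem tendsto_pow_atTop_nhds_zero_of_forall_norm_lt_one {A : Type*} [NormedRing A]
    [NormedAlgebra ℂ A] [CompleteSpace A] {a : A} (ha : ∀ z ∈ spectrum ℂ a, ‖z‖ < 1) :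
    Tendsto (a ^ ·) atTop (𝓝 0) := by
  cases subsingleton_or_nontrivial A
  · simp [Subsingleton.elim _ (0 : A)]
  have hρ : spectralRadius ℂ a < 1 := by
    simpa using spectrum.spectralRadius_lt_of_forall_lt a (r := 1)
      fun z hz => NNReal.coe_lt_coe.1 (ha z hz)
  obtain ⟨c, hρc, hc1⟩ := ENNReal.lt_iff_exists_nnreal_btwn.mp hρ
  have hbound : ∀ᶠ k : ℕ in atTop, ‖a ^ k‖ ≤ (c : ℝ) ^ k := by
    have hgelfand := spectrum.pow_norm_pow_one_div_tendsto_nhds_spectralRadius a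
    filter_upwards [hgelfand.eventually_lt_const hρc, eventually_gt_atTop 0] with k hk hk0
    rw [ENNReal.ofReal_lt_coe_iff (by positivity), one_div,
      Real.rpow_inv_lt_iff_of_pos (norm_nonneg _) c.coe_nonneg (Nat.cast_pos.2 hk0),
      Real.rpow_natCast] at hk
    exact hk.le
  exact squeeze_zero_norm' hbound
    (tendsto_pow_atTop_nhds_zero_of_lt_one c.coe_nonneg (by exact_mod_cast hc1))

namespace Matrix

variable {m n 𝕜 : Type*} [RCLike 𝕜]

theorem conjTranspose_map_algebraMap (M : Matrix n n ℝ) :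
    (M.map (algebraMap ℝ 𝕜))ᴴ = Mᵀ.map (algebraMap ℝ 𝕜) := by
  rw [← conjTranspose_map _ (fun r => (RCLike.conj_ofReal r).symm),
    conjTranspose_eq_transpose_of_trivial]

theorem riccati_closedLoop_identity [Fintype m] [Fintype n] [DecidableEq m] {K : Type*}
    [CommRing K] {A P : Matrix n n K} {B : Matrix n m K} {R Ψ : Matrix m m K} {L H : Matrix m n K} {γ : K}
    (hP : P.IsSymm) (hΨs : Ψ.IsSymm) (hΨu : IsUnit Ψ.det)
    (hL : L = Bᵀ * P * A) (hΨ : Ψ = R + γ • (Bᵀ * P * B)) (hH : H = γ • (Ψ⁻¹ * L)) :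
    γ • ((A - B * H)ᵀ * P * (A - B * H)) + Hᵀ * R * H =
      γ • (Aᵀ * P * A) - γ ^ 2 • (Lᵀ * Ψ⁻¹ * L) := by
  have hLt : Lᵀ = Aᵀ * P * B := by
    rw [hL, transpose_mul, transpose_mul, transpose_transpose, hP.eq, Matrix.mul_assoc]
  have hHt : Hᵀ = γ • (Lᵀ * Ψ⁻¹) := by
    rw [hH, transpose_smul, transpose_mul, transpose_nonsing_inv, hΨs.eq]
  have hLH : Lᵀ * H = γ • (Lᵀ * Ψ⁻¹ * L) := by
    rw [hH, Matrix.mul_smul, Matrix.mul_assoc]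
  have hHL : Hᵀ * L = γ • (Lᵀ * Ψ⁻¹ * L) := by
    rw [hHt, Matrix.smul_mul]
  have hHΨH : Hᵀ * Ψ * H = γ ^ 2 • (Lᵀ * Ψ⁻¹ * L) := by
    rw [hHt, hH, Matrix.smul_mul, Matrix.smul_mul, Matrix.mul_smul, smul_smul, ← sq,
      Matrix.mul_assoc, Matrix.mul_assoc, ← Matrix.mul_assoc Ψ, mul_nonsing_inv Ψ hΨu,
      Matrix.one_mul, ← Matrix.mul_assoc]
  calc γ • ((A - B * H)ᵀ * P * (A - B * H)) + Hᵀ * R * H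
      = γ • (Aᵀ * P * A) - γ • (Lᵀ * H) - γ • (Hᵀ * L) + Hᵀ * (R + γ • (Bᵀ * P * B)) * H := by
        rw [hLt, hL]
        simp only [transpose_sub, transpose_mul, Matrix.sub_mul, Matrix.mul_sub, Matrix.mul_add,
          Matrix.add_mul, Matrix.mul_smul, Matrix.smul_mul, Matrix.mul_assoc, smul_sub]
        abel
    _ = γ • (Aᵀ * P * A) - γ ^ 2 • (Lᵀ * Ψ⁻¹ * L) := by
        rw [← hΨ, hLH, hHL, hHΨH]
        module

variable [Fintype n] [DecidableEq n]

theorem exists_mulVec_eq_smul_of_mem_spectrum {K : Type*} [Field K] {M : Matrix n n K} {μ : K}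
    (hμ : μ ∈ spectrum K M) : ∃ v ≠ 0, M *ᵥ v = μ • v := by
  rw [spectrum.mem_iff, isUnit_iff_isUnit_det, isUnit_iff_ne_zero, not_not,
    ← exists_mulVec_eq_zero_iff] at hμ
  obtain ⟨v, hv, hμv⟩ := hμ
  refine ⟨v, hv, ?_⟩
  rw [sub_mulVec, sub_eq_zero, Algebra.algebraMap_eq_smul_one, smul_mulVec, one_mulVec] at hμv
  exact hμv.symm

theorem norm_lt_one_of_mem_spectrum_of_posDef_sub {M P : Matrix n n 𝕜} (hP : P.PosSemidef)
    (hMP : (P - Mᴴ * P * M).PosDef) {μ : 𝕜} (hμ : μ ∈ spectrum 𝕜 M) : ‖μ‖ < 1 := by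
  obtain ⟨v, hv, hMv⟩ := exists_mulVec_eq_smul_of_mem_spectrum hμ
  have hform : star v ⬝ᵥ ((Mᴴ * P * M) *ᵥ v) = ((‖μ‖ ^ 2 : ℝ) : 𝕜) * (star v ⬝ᵥ (P *ᵥ v)) := by
    rw [← mulVec_mulVec, ← mulVec_mulVec, dotProduct_mulVec (star v) Mᴴ, ← star_mulVec, hMv,
      star_smul, smul_dotProduct, mulVec_smul, dotProduct_smul, smul_eq_mul, smul_eq_mul,
      ← mul_assoc, RCLike.star_def, RCLike.conj_mul]
    push_cast
    rfl
  have hpos := hMP.re_dotProduct_pos hv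
  rw [sub_mulVec, dotProduct_sub, hform, map_sub, RCLike.re_ofReal_mul] at hpos
  have hnonneg := hP.re_dotProduct_nonneg v
  have hsq : ‖μ‖ ^ 2 < 1 := by nlinarith
  exact (sq_lt_one_iff₀ (norm_nonneg μ)).1 hsq

open scoped MatrixOrder in
theorem PosDef.map_algebraMap {P : Matrix n n ℝ} (hP : P.PosDef) :
    (P.map (algebraMap ℝ 𝕜)).PosDef := by
  set S := CFC.sqrt P
  have hS : Sᵀ = S := (CFC.sqrt_nonneg P).isSelfAdjoint
  have hPS : P.map (algebraMap ℝ 𝕜) = (S.map (algebraMap ℝ 𝕜))ᴴ * S.map (algebraMap ℝ 𝕜) := by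
    rw [conjTranspose_map_algebraMap, hS, ← Matrix.map_mul,
      CFC.sqrt_mul_sqrt_self P hP.posSemidef.nonneg]
  have hPSD : (P.map (algebraMap ℝ 𝕜)).PosSemidef := hPS ▸ posSemidef_conjTranspose_mul_self _
  rw [hPSD.posDef_iff_det_ne_zero, ← RingHom.mapMatrix_apply, ← RingHom.map_det]
  simpa using hP.det_pos.ne'

theorem tendsto_pow_atTop_nhds_zero_of_forall_norm_lt_one {M : Matrix n n ℂ}
    (hM : ∀ z ∈ spectrum ℂ M, ‖z‖ < 1) : Tendsto (M ^ ·) atTop (𝓝 0) := by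
  let _ : NormedRing (Matrix n n ℂ) := Matrix.linftyOpNormedRing
  let _ : NormedAlgebra ℂ (Matrix n n ℂ) := Matrix.linftyOpNormedAlgebra
  have : CompleteSpace (Matrix n n ℂ) := FiniteDimensional.complete ℂ _
  exact _root_.tendsto_pow_atTop_nhds_zero_of_forall_norm_lt_one hM

theorem tendsto_pow_atTop_nhds_zero_of_forall_norm_lt_one_map {M : Matrix n n ℝ}
    (hM : ∀ z ∈ spectrum ℂ (M.map (algebraMap ℝ ℂ)), ‖z‖ < 1) :
    Tendsto (M ^ ·) atTop (𝓝 0) := by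
  have hre := ((continuous_id.matrix_map Complex.continuous_re).tendsto 0).comp
    (tendsto_pow_atTop_nhds_zero_of_forall_norm_lt_one hM)
  convert hre using 2 with k
  · rw [Function.comp_apply, ← RingHom.mapMatrix_apply, ← map_pow, RingHom.mapMatrix_apply]
    ext i j
    simp
  · simp

end Matrix

theorem riccati_stabilizing_feedback_general
    {d m : ℕ} (A : Matrix (Fin d) (Fin d) ℝ) (B : Matrix (Fin d) (Fin m) ℝ)
    (γ : ℝ) (hγ0 : 0 < γ)
    (Q P : Matrix (Fin d) (Fin d) ℝ) (R : Matrix (Fin m) (Fin m) ℝ)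
    (hR : R.PosDef) (hP : P.PosDef)
    (L : Matrix (Fin m) (Fin d) ℝ) (hL : L = Bᵀ * P * A)
    (Ψ : Matrix (Fin m) (Fin m) ℝ) (hΨ : Ψ = R + γ • (Bᵀ * P * B))
    (H : Matrix (Fin m) (Fin d) ℝ) (hH : H = γ • (Ψ⁻¹ * L))
    (hric : P = Q + γ • (Aᵀ * P * A) - (γ ^ 2) • (Lᵀ * Ψ⁻¹ * L))
    (hgap : (Q + Hᵀ * R * H - (1 - γ) • P).PosDef) :
    (∀ lam ∈ spectrum ℂ ((A - B * H).map (algebraMap ℝ ℂ)), ‖lam‖ < 1) ∧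
      Filter.Tendsto (fun k : ℕ => (A - B * H) ^ k) Filter.atTop (nhds 0) := by
  have hBPB : (Bᵀ * P * B).PosSemidef := by
    simpa using hP.posSemidef.conjTranspose_mul_mul_same B
  have hΨpd : Ψ.PosDef := hΨ ▸ hR.add_posSemidef (hBPB.smul hγ0.le)
  have hclosed := riccati_closedLoop_identity (isHermitian_iff_isSymm.1 hP.isHermitian)
    (isHermitian_iff_isSymm.1 hΨpd.isHermitian) (isUnit_iff_ne_zero.2 hΨpd.det_pos.ne') hL hΨ hH
  set M := A - B * H
  have hscaled : γ • (P - Mᵀ * P * M) = Q + Hᵀ * R * H - (1 - γ) • P := by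
    linear_combination (norm := module) hric - hclosed
  have hstein : (P - Mᵀ * P * M).PosDef := by
    rw [← inv_smul_smul₀ hγ0.ne' (P - Mᵀ * P * M), hscaled]
    exact hgap.smul (inv_pos.2 hγ0)
  have hspec : ∀ lam ∈ spectrum ℂ (M.map (algebraMap ℝ ℂ)), ‖lam‖ < 1 := fun lam hlam =>
    norm_lt_one_of_mem_spectrum_of_posDef_sub hP.map_algebraMap.posSemidef
      (by simpa only [Matrix.map_sub _ (map_sub (algebraMap ℝ ℂ)), Matrix.map_mul,
          conjTranspose_map_algebraMap]
        using hstein.map_algebraMap (𝕜 := ℂ)) hlam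
  exact ⟨hspec, tendsto_pow_atTop_nhds_zero_of_forall_norm_lt_one_map hspec⟩

/-- Sufficiency core of the paper's Theorem 3: if `𝒫 ≻ 0` solves the discounted algebraic
Riccati equation and `(1 − γ)𝒫 ≺ Q + HᵀRH`, then the closed-loop matrix `A − BH` is Schur
stable: every complex eigenvalue has modulus `< 1` and `(A − BH)ᵏ → 0`. -/
theorem riccati_stabilizing_feedback
    {d m : ℕ} (A : Matrix (Fin d) (Fin d) ℝ) (B : Matrix (Fin d) (Fin m) ℝ)
    (γ : ℝ) (hγ0 : 0 < γ) (hγ1 : γ < 1)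
    (Q P : Matrix (Fin d) (Fin d) ℝ) (R : Matrix (Fin m) (Fin m) ℝ)
    (hQ : Q.PosSemidef) (hR : R.PosDef) (hP : P.PosDef)
    (L : Matrix (Fin m) (Fin d) ℝ) (hL : L = Bᵀ * P * A)
    (Ψ : Matrix (Fin m) (Fin m) ℝ) (hΨ : Ψ = R + γ • (Bᵀ * P * B))
    (H : Matrix (Fin m) (Fin d) ℝ) (hH : H = γ • (Ψ⁻¹ * L))
    (hric : P = Q + γ • (Aᵀ * P * A) - (γ ^ 2) • (Lᵀ * Ψ⁻¹ * L))
    (hgap : (Q + Hᵀ * R * H - (1 - γ) • P).PosDef) :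
    (∀ lam ∈ spectrum ℂ ((A - B * H).map (algebraMap ℝ ℂ)), ‖lam‖ < 1) ∧
      Filter.Tendsto (fun k : ℕ => (A - B * H) ^ k) Filter.atTop (nhds 0) :=
  riccati_stabilizing_feedback_general A B γ hγ0 Q P R hR hP L hL Ψ hΨ H hH hric hgap
end

section
/- Let A ∈ ℝ^{d×d}, B ∈ ℝ^{d×m}, 0 < γ ≤ 1, let Q ∈ ℝ^{d×d} be symmetric positive semidefinite and R ∈ ℝ^{m×m} symmetric positive definite. Define the Riccati iteration from zero: S(0) = 0 and S(j+1) = Q + γAᵀS(j)A − γ²AᵀS(j)B(R + γBᵀS(j)B)⁻¹BᵀS(j)A for j ∈ ℕ. Then every S(j) is symmetric positive semidefinite, every R + γBᵀS(j)B is positive definite (hence invertible), and the sequence is monotone nondecreasing in the Loewner order: S(j) ⪯ S(j+1) for all j ∈ ℕ. -/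
/-! For a gain `K`, the closed-loop cost `Q + KᵀRK + γ(A + BK)ᵀX(A + BK)` equals the Riccati
map at `X` plus the square `(K - K*)ᵀ(R + γBᵀXB)(K - K*)`, where `K*` is the optimal gain.
Hence the Riccati map is a pointwise minimum of closed-loop costs, each of which is positive
semidefinite and monotone in `X`; so it preserves positive semidefiniteness and the Loewner
order, and the iteration from `0 ⪯ S 1` is nondecreasing by induction. -/

open Matrix

section Riccati

variable {n p : Type*} [Fintype n] [Fintype p]

lemma Matrix.PosSemidef.transpose_mul_mul_same {X : Matrix n n ℝ} (hX : X.PosSemidef)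
    (C : Matrix n p ℝ) : (Cᵀ * X * C).PosSemidef := by
  simpa only [conjTranspose_eq_transpose_of_trivial] using hX.conjTranspose_mul_mul_same C

omit [Fintype n] in
lemma Matrix.IsHermitian.transpose_eq {X : Matrix n n ℝ} (hX : X.IsHermitian) : Xᵀ = X := by
  simpa only [conjTranspose_eq_transpose_of_trivial] using hX.eq

omit [Fintype n] in
lemma transpose_add_smul_mul_mul_add_smul {M : Matrix p p ℝ} (hM : Mᵀ = M)
    {G W : Matrix p n ℝ} (hMG : M * G = W) (K : Matrix p n ℝ) (γ : ℝ) :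
    (K + γ • G)ᵀ * M * (K + γ • G) =
      Kᵀ * M * K + γ • (Kᵀ * W) + γ • (Wᵀ * K) + γ ^ 2 • (Wᵀ * G) := by
  have hGM : Gᵀ * M = Wᵀ := by rw [← hMG, transpose_mul, hM]
  simp only [transpose_add, transpose_smul, Matrix.add_mul, Matrix.mul_add, Matrix.smul_mul,
    Matrix.mul_smul, hGM, Matrix.mul_assoc, hMG]
  module

variable (A : Matrix n n ℝ) (B : Matrix n p ℝ) (Q : Matrix n n ℝ) (R : Matrix p p ℝ) (γ : ℝ)

def controlWeight (X : Matrix n n ℝ) : Matrix p p ℝ := R + γ • (Bᵀ * X * B)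

def feedbackCost (K : Matrix p n ℝ) (X : Matrix n n ℝ) : Matrix n n ℝ :=
  Q + Kᵀ * R * K + γ • ((A + B * K)ᵀ * X * (A + B * K))

variable [DecidableEq p]

noncomputable def optimalGain (X : Matrix n n ℝ) : Matrix p n ℝ :=
  -(γ • ((controlWeight B R γ X)⁻¹ * (Bᵀ * X * A)))

noncomputable def riccatiMap (X : Matrix n n ℝ) : Matrix n n ℝ :=
  Q + γ • (Aᵀ * X * A) - γ ^ 2 • (Aᵀ * X * B * (controlWeight B R γ X)⁻¹ * Bᵀ * X * A)

variable {A B Q R γ}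

omit [DecidableEq p] in
lemma posDef_controlWeight (hR : R.PosDef) (hγ : 0 ≤ γ) {X : Matrix n n ℝ}
    (hX : X.PosSemidef) : (controlWeight B R γ X).PosDef :=
  hR.add_posSemidef ((hX.transpose_mul_mul_same B).smul hγ)

omit [DecidableEq p] in
lemma posSemidef_feedbackCost (hQ : Q.PosSemidef) (hR : R.PosSemidef) (hγ : 0 ≤ γ)
    (K : Matrix p n ℝ) {X : Matrix n n ℝ} (hX : X.PosSemidef) :
    (feedbackCost A B Q R γ K X).PosSemidef :=
  (hQ.add (hR.transpose_mul_mul_same K)).add ((hX.transpose_mul_mul_same _).smul hγ)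

omit [DecidableEq p] in
lemma feedbackCost_sub_feedbackCost (K : Matrix p n ℝ) (X Y : Matrix n n ℝ) :
    feedbackCost A B Q R γ K Y - feedbackCost A B Q R γ K X =
      γ • ((A + B * K)ᵀ * (Y - X) * (A + B * K)) := by
  simp only [feedbackCost, Matrix.mul_sub, Matrix.sub_mul, smul_sub]
  abel

/-- Completing the square in the gain `K`. -/
lemma feedbackCost_eq_riccatiMap_add (hR : R.PosDef) (hγ : 0 ≤ γ) {X : Matrix n n ℝ}
    (hX : X.PosSemidef) (K : Matrix p n ℝ) :
    feedbackCost A B Q R γ K X = riccatiMap A B Q R γ X +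
      (K - optimalGain A B R γ X)ᵀ * controlWeight B R γ X * (K - optimalGain A B R γ X) := by
  have hM := posDef_controlWeight (B := B) hR hγ hX
  rw [optimalGain, sub_neg_eq_add, transpose_add_smul_mul_mul_add_smul hM.isHermitian.transpose_eq
    (mul_nonsing_inv_cancel_left _ _ ((isUnit_iff_isUnit_det _).mp hM.isUnit))]
  simp only [feedbackCost, riccatiMap, controlWeight, transpose_add, transpose_mul,
    transpose_transpose, hX.isHermitian.transpose_eq, Matrix.add_mul, Matrix.mul_add,
    Matrix.smul_mul, Matrix.mul_smul, Matrix.mul_assoc]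
  module

lemma riccatiMap_eq_feedbackCost_optimalGain (hR : R.PosDef) (hγ : 0 ≤ γ) {X : Matrix n n ℝ}
    (hX : X.PosSemidef) :
    riccatiMap A B Q R γ X = feedbackCost A B Q R γ (optimalGain A B R γ X) X := by
  simp [feedbackCost_eq_riccatiMap_add hR hγ hX]

lemma posSemidef_riccatiMap (hQ : Q.PosSemidef) (hR : R.PosDef) (hγ : 0 ≤ γ)
    {X : Matrix n n ℝ} (hX : X.PosSemidef) : (riccatiMap A B Q R γ X).PosSemidef := by
  rw [riccatiMap_eq_feedbackCost_optimalGain hR hγ hX]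
  exact posSemidef_feedbackCost hQ hR.posSemidef hγ _ hX

/-- Evaluate both sides at the gain that is optimal for `Y`; for `X` it is only suboptimal. -/
lemma posSemidef_riccatiMap_sub (hR : R.PosDef) (hγ : 0 ≤ γ) {X Y : Matrix n n ℝ}
    (hX : X.PosSemidef) (hY : Y.PosSemidef) (hXY : (Y - X).PosSemidef) :
    (riccatiMap A B Q R γ Y - riccatiMap A B Q R γ X).PosSemidef := by
  set K := optimalGain A B R γ Y
  have hYK : riccatiMap A B Q R γ Y = feedbackCost A B Q R γ K Y :=
    riccatiMap_eq_feedbackCost_optimalGain hR hγ hY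
  have hdiff : riccatiMap A B Q R γ Y - riccatiMap A B Q R γ X =
      γ • ((A + B * K)ᵀ * (Y - X) * (A + B * K)) +
        (K - optimalGain A B R γ X)ᵀ * controlWeight B R γ X * (K - optimalGain A B R γ X) := by
    rw [← feedbackCost_sub_feedbackCost, hYK, feedbackCost_eq_riccatiMap_add hR hγ hX K]
    abel
  rw [hdiff]
  exact ((hXY.transpose_mul_mul_same _).smul hγ).add
    ((posDef_controlWeight hR hγ hX).posSemidef.transpose_mul_mul_same _)

end Riccati

theorem riccati_iteration_monotone_general
    {d m : ℕ} (A : Matrix (Fin d) (Fin d) ℝ) (B : Matrix (Fin d) (Fin m) ℝ)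
    (γ : ℝ) (hγ0 : 0 < γ)
    (Q : Matrix (Fin d) (Fin d) ℝ) (R : Matrix (Fin m) (Fin m) ℝ)
    (hQ : Q.PosSemidef) (hR : R.PosDef)
    (S : ℕ → Matrix (Fin d) (Fin d) ℝ)
    (hS0 : S 0 = 0)
    (hSrec : ∀ j : ℕ, S (j + 1) =
      Q + γ • (Aᵀ * S j * A)
        - (γ ^ 2) • (Aᵀ * S j * B * (R + γ • (Bᵀ * S j * B))⁻¹ * Bᵀ * S j * A)) :
    ∀ j : ℕ, (S j).PosSemidef ∧ (R + γ • (Bᵀ * S j * B)).PosDef ∧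
      (S (j + 1) - S j).PosSemidef := by
  have hrec : ∀ j, S (j + 1) = riccatiMap A B Q R γ (S j) := hSrec
  have hpsd : ∀ j, (S j).PosSemidef := by
    intro j
    induction j with
    | zero => exact hS0 ▸ .zero
    | succ j ih => exact hrec j ▸ posSemidef_riccatiMap hQ hR hγ0.le ih
  have hmono : ∀ j, (S (j + 1) - S j).PosSemidef := by
    intro j
    induction j with
    | zero => rw [hS0, sub_zero]; exact hpsd 1
    | succ j ih =>
      have := posSemidef_riccatiMap_sub (A := A) (B := B) (Q := Q) hR hγ0.le (hpsd j)
        (hpsd (j + 1)) ih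
      rwa [← hrec, ← hrec] at this
  exact fun j => ⟨hpsd j, posDef_controlWeight hR hγ0.le (hpsd j), hmono j⟩

/-- The discounted Riccati iteration started from zero is well defined and monotone
nondecreasing in the Loewner order: every iterate is positive semidefinite, every
`R + γBᵀS(j)B` is positive definite (hence invertible), and `S(j) ⪯ S(j+1)` for all `j`. -/
theorem riccati_iteration_monotone
    {d m : ℕ} (A : Matrix (Fin d) (Fin d) ℝ) (B : Matrix (Fin d) (Fin m) ℝ)
    (γ : ℝ) (hγ0 : 0 < γ) (hγ1 : γ ≤ 1)
    (Q : Matrix (Fin d) (Fin d) ℝ) (R : Matrix (Fin m) (Fin m) ℝ)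
    (hQ : Q.PosSemidef) (hR : R.PosDef)
    (S : ℕ → Matrix (Fin d) (Fin d) ℝ)
    (hS0 : S 0 = 0)
    (hSrec : ∀ j : ℕ, S (j + 1) =
      Q + γ • (Aᵀ * S j * A)
        - (γ ^ 2) • (Aᵀ * S j * B * (R + γ • (Bᵀ * S j * B))⁻¹ * Bᵀ * S j * A)) :
    ∀ j : ℕ, (S j).PosSemidef ∧ (R + γ • (Bᵀ * S j * B)).PosDef ∧
      (S (j + 1) - S j).PosSemidef :=
  riccati_iteration_monotone_general A B γ hγ0 Q R hQ hR S hS0 hSrec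
end

section
/- Let A ∈ ℝ^{d×d}, B ∈ ℝ^{d×m}, 0 < γ < 1, let Q ∈ ℝ^{d×d} be symmetric positive semidefinite and R ∈ ℝ^{m×m} symmetric positive definite. Suppose 𝒫 ∈ ℝ^{d×d} is symmetric positive semidefinite and satisfies the discounted algebraic Riccati equation 𝒫 = Q + γAᵀ𝒫A − γ²LᵀΨ⁻¹L with L = Bᵀ𝒫A, Ψ = R + γBᵀ𝒫B, H = γΨ⁻¹L, and suppose every complex eigenvalue of A − BH has modulus strictly less than 1. Then for every x₀ ∈ ℝᵈ, setting x(k) = (A − BH)ᵏ x₀, the discounted closed-loop cost series converges and ∑_{k=0}^{∞} γᵏ x(k)ᵀ(Q + HᵀRH)x(k) = x₀ᵀ 𝒫 x₀. -/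
open Matrix Filter Topology

/-- Entry bound for the `L∞`-operator norm. -/
private lemma entry_le_linfty {d : ℕ} (a : Matrix (Fin d) (Fin d) ℂ) (i j : Fin d) :
    ‖a i j‖₊ ≤ (Finset.univ : Finset (Fin d)).sup fun i => ∑ j, ‖a i j‖₊ := by
  calc ‖a i j‖₊ ≤ ∑ j', ‖a i j'‖₊ :=
        Finset.single_le_sum (f := fun j' => ‖a i j'‖₊) (fun _ _ => zero_le) (Finset.mem_univ j)
    _ ≤ _ := Finset.le_sup (f := fun i => ∑ j', ‖a i j'‖₊) (Finset.mem_univ i)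

/-- If all complex eigenvalues of a real matrix have modulus `< 1`, then entries of its
powers tend to zero. -/
lemma schur_pow_entry_tendsto {d : ℕ} (M : Matrix (Fin d) (Fin d) ℝ)
    (h : ∀ lam ∈ spectrum ℂ (M.map (algebraMap ℝ ℂ)), ‖lam‖ < 1) (i j : Fin d) :
    Tendsto (fun n => (M ^ n) i j) atTop (𝓝 0) := by
  letI : NormedRing (Matrix (Fin d) (Fin d) ℂ) := Matrix.linftyOpNormedRing
  letI : NormedAlgebra ℂ (Matrix (Fin d) (Fin d) ℂ) := Matrix.linftyOpNormedAlgebra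
  haveI : CompleteSpace (Matrix (Fin d) (Fin d) ℂ) := FiniteDimensional.complete ℂ _
  set M' := M.map (algebraMap ℝ ℂ) with hM'
  have hfin : (spectrum ℂ M').Finite := Matrix.finite_spectrum M'
  have hρ : spectralRadius ℂ M' < 1 := by
    rcases (spectrum ℂ M').eq_empty_or_nonempty with he | hne
    · rw [spectralRadius, he]; simp
    · obtain ⟨z₀, hz₀, hmax⟩ := hfin.exists_maximalFor (fun z => ‖z‖) _ hne
      have hle : spectralRadius ℂ M' ≤ (‖z₀‖₊ : ENNReal) := by
        refine iSup₂_le fun z hz => ?_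
        have : ‖z‖ ≤ ‖z₀‖ := by
          by_contra hlt
          push_neg at hlt
          exact absurd (hmax hz hlt.le) (not_le.mpr hlt)
        exact_mod_cast this
      refine lt_of_le_of_lt hle ?_
      rw [ENNReal.coe_lt_one_iff]
      exact_mod_cast h z₀ hz₀
  obtain ⟨c, hc1, hc2⟩ := exists_between hρ
  lift c to NNReal using (hc2.trans ENNReal.one_lt_top).ne
  have ht1 : (c : ℝ) < 1 := by exact_mod_cast hc2
  have G := spectrum.pow_nnnorm_pow_one_div_tendsto_nhds_spectralRadius M'
  have hev : ∀ᶠ n : ℕ in atTop, ((‖M' ^ n‖₊ : ENNReal)) ^ (1/(n:ℝ)) < (c : ENNReal) :=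
    G.eventually_lt_const hc1
  have hbound : ∀ᶠ n in atTop, ‖M' ^ n‖ ≤ (c:ℝ)^n := by
    filter_upwards [hev, eventually_ge_atTop 1] with n hn hn1
    have hn0 : (n:ℝ) ≠ 0 := Nat.cast_ne_zero.mpr (by omega)
    have h1 : (((‖M' ^ n‖₊ : ENNReal)) ^ (1/(n:ℝ))) ^ (n:ℝ) ≤ (c : ENNReal) ^ (n:ℝ) :=
      ENNReal.rpow_le_rpow hn.le (by positivity)
    rw [← ENNReal.rpow_mul, one_div, inv_mul_cancel₀ hn0, ENNReal.rpow_one,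
      ENNReal.rpow_natCast, ← ENNReal.coe_pow, ENNReal.coe_le_coe] at h1
    exact_mod_cast h1
  have hnorm : Tendsto (fun n => ‖M' ^ n‖) atTop (𝓝 0) :=
    squeeze_zero' (Eventually.of_forall fun n => norm_nonneg _) hbound
      (tendsto_pow_atTop_nhds_zero_of_lt_one c.coe_nonneg ht1)
  have hentry : ∀ n, |(M ^ n) i j| ≤ ‖M' ^ n‖ := by
    intro n
    have hmap : M' ^ n = (M ^ n).map (algebraMap ℝ ℂ) := by
      rw [hM']
      exact (map_pow ((algebraMap ℝ ℂ).mapMatrix) M n).symm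
    have h1 : ‖(M' ^ n) i j‖ = |(M ^ n) i j| := by
      rw [hmap]
      simp [Matrix.map_apply, Complex.norm_real]
    rw [← h1, ← coe_nnnorm, ← coe_nnnorm]
    exact_mod_cast (by
      rw [Matrix.linfty_opNNNorm_def]
      exact entry_le_linfty (M' ^ n) i j : ‖(M' ^ n) i j‖₊ ≤ ‖M' ^ n‖₊)
  exact squeeze_zero_norm (fun n => by simpa [Real.norm_eq_abs] using hentry n) hnorm


/-- Noise-free discounted closed-loop cost formula: if `𝒫 ⪰ 0` solves the discounted algebraic
Riccati equation and `A − BH` is Schur stable, then for every initial state `x₀`, with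
`x(k) = (A − BH)ᵏ x₀`, the series `∑ γᵏ x(k)ᵀ(Q + HᵀRH)x(k)` converges with sum `x₀ᵀ𝒫x₀`. -/
theorem discounted_closed_loop_cost
    {d m : ℕ} (A : Matrix (Fin d) (Fin d) ℝ) (B : Matrix (Fin d) (Fin m) ℝ)
    (γ : ℝ) (hγ0 : 0 < γ) (hγ1 : γ < 1)
    (Q P : Matrix (Fin d) (Fin d) ℝ) (R : Matrix (Fin m) (Fin m) ℝ)
    (hQ : Q.PosSemidef) (hR : R.PosDef) (hP : P.PosSemidef)
    (L : Matrix (Fin m) (Fin d) ℝ) (hL : L = Bᵀ * P * A)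
    (Ψ : Matrix (Fin m) (Fin m) ℝ) (hΨ : Ψ = R + γ • (Bᵀ * P * B))
    (H : Matrix (Fin m) (Fin d) ℝ) (hH : H = γ • (Ψ⁻¹ * L))
    (hric : P = Q + γ • (Aᵀ * P * A) - (γ ^ 2) • (Lᵀ * Ψ⁻¹ * L))
    (hschur : ∀ lam ∈ spectrum ℂ ((A - B * H).map (algebraMap ℝ ℂ)), ‖lam‖ < 1) :
    ∀ x₀ : Fin d → ℝ,
      HasSum
        (fun k : ℕ =>
          γ ^ k * (((A - B * H) ^ k).mulVec x₀ ⬝ᵥ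
            (Q + Hᵀ * R * H).mulVec (((A - B * H) ^ k).mulVec x₀)))
        (x₀ ⬝ᵥ P.mulVec x₀) := by
  intro x₀
  set M := A - B * H with hMdef
  have hPsym : Pᵀ = P := by
    have h := hP.isHermitian
    rwa [Matrix.IsHermitian, Matrix.conjTranspose_eq_transpose_of_trivial] at h
  have hRsym : Rᵀ = R := by
    have h := hR.isHermitian
    rwa [Matrix.IsHermitian, Matrix.conjTranspose_eq_transpose_of_trivial] at h
  have hBtPBsym : (Bᵀ * P * B)ᵀ = Bᵀ * P * B := by
    simp [Matrix.transpose_mul, Matrix.mul_assoc, hPsym]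
  have hBtPB : (Bᵀ * P * B).PosSemidef := by
    have := hP.conjTranspose_mul_mul_same B
    rwa [Matrix.conjTranspose_eq_transpose_of_trivial] at this
  have hsm : (γ • (Bᵀ * P * B)).PosSemidef := by
    constructor
    · have h1 := hBtPB.isHermitian
      rw [Matrix.IsHermitian] at h1 ⊢
      rw [Matrix.conjTranspose_smul, h1]
      simp
    · intro x
      exact (hBtPB.smul hγ0.le).2 x
  have hΨpd : Ψ.PosDef := hΨ ▸ hR.add_posSemidef hsm
  have hdet : IsUnit Ψ.det := (Matrix.isUnit_iff_isUnit_det _).mp hΨpd.isUnit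
  have hΨΨi : Ψ * Ψ⁻¹ = 1 := Matrix.mul_nonsing_inv _ hdet
  have hΨsym : Ψᵀ = Ψ := by
    rw [hΨ, Matrix.transpose_add, Matrix.transpose_smul, hBtPBsym, hRsym]
  have hΨisym : (Ψ⁻¹)ᵀ = Ψ⁻¹ := by rw [Matrix.transpose_nonsing_inv, hΨsym]
  have hHT : Hᵀ = γ • (Lᵀ * Ψ⁻¹) := by
    rw [hH, Matrix.transpose_smul, Matrix.transpose_mul, hΨisym]
  have hLT : Aᵀ * P * B = Lᵀ := by
    rw [hL]
    simp [Matrix.transpose_mul, Matrix.mul_assoc, hPsym]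
  set S := Lᵀ * Ψ⁻¹ * L with hS
  have h1 : (Aᵀ * P * B) * H = γ • S := by
    rw [hLT, hH, Matrix.mul_smul, hS, Matrix.mul_assoc]
  have h2 : Hᵀ * (Bᵀ * P * A) = γ • S := by
    rw [hHT, ← hL, Matrix.smul_mul, hS, Matrix.mul_assoc]
  have hcan : ∀ X : Matrix (Fin m) (Fin d) ℝ, Ψ * (Ψ⁻¹ * X) = X := fun X => by
    rw [← Matrix.mul_assoc, hΨΨi, Matrix.one_mul]
  have h3 : Hᵀ * Ψ * H = (γ * γ) • S := by
    rw [hHT, hH]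
    simp only [Matrix.smul_mul, Matrix.mul_smul, smul_smul, Matrix.mul_assoc, hcan]
    rw [hS, Matrix.mul_assoc]
  have hRH : Hᵀ * R * H = (γ * γ) • S - γ • (Hᵀ * (Bᵀ * P * B) * H) := by
    rw [← h3, hΨ]
    simp only [Matrix.add_mul, Matrix.mul_add, Matrix.smul_mul, Matrix.mul_smul]
    abel
  have expand : Mᵀ * P * M =
      Aᵀ * P * A - (Aᵀ * P * B) * H - Hᵀ * (Bᵀ * P * A) + Hᵀ * (Bᵀ * P * B) * H := by
    rw [hMdef]
    simp only [Matrix.transpose_sub, Matrix.transpose_mul]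
    noncomm_ring
    simp only [Matrix.mul_assoc]
    abel
  have key : P = γ • (Mᵀ * P * M) + (Q + Hᵀ * R * H) := by
    conv_lhs => rw [hric]
    rw [expand, h1, h2, hRH, pow_two]
    module
  have hCps : (Q + Hᵀ * R * H).PosSemidef := by
    refine hQ.add ?_
    have := hR.posSemidef.conjTranspose_mul_mul_same H
    rwa [Matrix.conjTranspose_eq_transpose_of_trivial] at this
  set C := Q + Hᵀ * R * H with hCdef
  have quad : ∀ v : Fin d → ℝ,
      v ⬝ᵥ P *ᵥ v = γ * ((M *ᵥ v) ⬝ᵥ P *ᵥ (M *ᵥ v)) + v ⬝ᵥ C *ᵥ v := by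
    intro v
    conv_lhs => rw [key]
    rw [Matrix.add_mulVec, dotProduct_add, Matrix.smul_mulVec, dotProduct_smul,
      smul_eq_mul]
    congr 2
    rw [Matrix.mul_assoc, ← Matrix.mulVec_mulVec, Matrix.dotProduct_mulVec,
      Matrix.vecMul_transpose, ← Matrix.mulVec_mulVec]
  set xk : ℕ → Fin d → ℝ := fun k => (M ^ k) *ᵥ x₀ with hxk
  have hfold : ∀ k : ℕ, (M ^ k) *ᵥ x₀ = xk k := fun _ => rfl
  set g : ℕ → ℝ := fun k => γ ^ k * (xk k ⬝ᵥ P *ᵥ xk k) with hg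
  have hxsucc : ∀ k, xk (k + 1) = M *ᵥ xk k := by
    intro k
    rw [hxk]
    simp only [pow_succ', ← Matrix.mulVec_mulVec]
  have hterm : ∀ k, γ ^ k * (xk k ⬝ᵥ C *ᵥ xk k) = g k - g (k + 1) := by
    intro k
    rw [hg]
    simp only [hxsucc, pow_succ]
    rw [quad (xk k)]
    ring
  have hps : ∀ n, ∑ k ∈ Finset.range n, γ ^ k * (xk k ⬝ᵥ C *ᵥ xk k) = g 0 - g n := by
    intro n
    simp only [hterm]
    exact Finset.sum_range_sub' g n
  have hg0 : g 0 = x₀ ⬝ᵥ P *ᵥ x₀ := by simp [hg, hxk]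
  have hxtend : ∀ i, Tendsto (fun k => xk k i) atTop (𝓝 0) := by
    intro i
    have hrfl : ∀ k, xk k i = ∑ j, (M ^ k) i j * x₀ j := fun k => rfl
    simp only [hrfl]
    have := tendsto_finset_sum (Finset.univ : Finset (Fin d))
      (fun j _ => (schur_pow_entry_tendsto M hschur i j).mul_const (x₀ j))
    simpa using this
  have hqtend : Tendsto (fun k => xk k ⬝ᵥ P *ᵥ xk k) atTop (𝓝 0) := by
    have hrfl : ∀ k, xk k ⬝ᵥ P *ᵥ xk k = ∑ i, xk k i * ∑ j, P i j * xk k j := fun k => rfl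
    simp only [hrfl]
    have h : Tendsto (fun k => ∑ i : Fin d, xk k i * ∑ j : Fin d, P i j * xk k j) atTop
        (𝓝 (∑ i : Fin d, 0 * ∑ j : Fin d, P i j * 0)) := by
      refine tendsto_finset_sum _ fun i _ => ?_
      refine (hxtend i).mul ?_
      refine tendsto_finset_sum _ fun j _ => ?_
      exact (tendsto_const_nhds (x := P i j)).mul (hxtend j)
    simpa using h
  have hgtend : Tendsto g atTop (𝓝 0) := by
    have := (tendsto_pow_atTop_nhds_zero_of_lt_one hγ0.le hγ1).mul hqtend
    simpa [hg] using this
  have hnonneg : ∀ k, 0 ≤ γ ^ k * (xk k ⬝ᵥ C *ᵥ xk k) := by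
    intro k
    refine mul_nonneg (pow_nonneg hγ0.le k) ?_
    have := hCps.dotProduct_mulVec_nonneg (xk k)
    simpa using this
  simp only [hfold]
  rw [hasSum_iff_tendsto_nat_of_nonneg hnonneg]
  have hlim : Tendsto (fun n => g 0 - g n) atTop (𝓝 (g 0 - 0)) :=
    tendsto_const_nhds.sub hgtend
  rw [sub_zero] at hlim
  rw [← hg0]
  exact hlim.congr fun n => (hps n).symm
end
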